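/- Let (W,S) be a Coxeter system, v, w, x ∈ W with v ≤ w in Bruhat order. Then there exists x' ≤ x such that vx ≤ w·x' and ℓ(w x') = ℓ(w) + ℓ(x'). -/

import Mathlib

namespace CoxeterPaper

open CoxeterSystem

variable {B : Type*} {W : Type*} [Group W] {M : CoxeterMatrix B}

/-- The Bruhat order on a Coxeter group: the reflexive-transitive closure of the
relation `a < a * t` for `t` a reflection with length increasing. -/
def BruhatLE (cs : CoxeterSystem M W) (x y : W) : Prop :=
  Relation.ReflTransGen
    (fun a b => (∃ t, cs.IsReflection t ∧ b = a * t) ∧ cs.length a < cs.length b) x y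

/-- One step of the Demazure product with a simple reflection. -/
noncomputable def demStep (cs : CoxeterSystem M W) (x : W) (i : B) : W :=
  if cs.length x < cs.length (x * cs.simple i) then x * cs.simple i else x

/-- The Demazure product of `x` with the word `l`. -/
noncomputable def demWord (cs : CoxeterSystem M W) (x : W) (l : List B) : W :=
  l.foldl (demStep cs) x

/-- The Demazure product (Coxeter monoid product) of two elements: fold the
Demazure action of a reduced word of `y` onto `x`. -/
noncomputable def dem (cs : CoxeterSystem M W) (x y : W) : W :=
  demWord cs x (Classical.choose (cs.exists_reduced_word y))

/-- The standard parabolic subgroup attached to a set of simple indices. -/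
def parabolic (cs : CoxeterSystem M W) (I : Set B) : Subgroup W :=
  Subgroup.closure (cs.simple '' I)

/-- `I` is finitary if the parabolic subgroup `W_I` is finite. -/
def Finitary (cs : CoxeterSystem M W) (I : Set B) : Prop :=
  (parabolic cs I : Set W).Finite

/-- The double coset `W_I w W_J` as a subset of `W`. -/
def doset (cs : CoxeterSystem M W) (I J : Set B) (w : W) : Set W :=
  {x | ∃ a ∈ parabolic cs I, ∃ b ∈ parabolic cs J, x = a * w * b}

/-- `p` is an `(I,J)`-double coset. -/
def IsDCoset (cs : CoxeterSystem M W) (I J : Set B) (p : Set W) : Prop :=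
  ∃ w, p = doset cs I J w

/-- `m` is the Bruhat-minimal element of `p`. -/
def IsMinOf (cs : CoxeterSystem M W) (p : Set W) (m : W) : Prop :=
  m ∈ p ∧ ∀ x ∈ p, BruhatLE cs m x

/-- `m` is the Bruhat-maximal element of `p`. -/
def IsMaxOf (cs : CoxeterSystem M W) (p : Set W) (m : W) : Prop :=
  m ∈ p ∧ ∀ x ∈ p, BruhatLE cs x m

/-- `[I 0, …, I d]` is a singlestep expression. -/
def IsSinglestep (I : ℕ → Set B) (d : ℕ) : Prop :=
  ∀ k < d, (∃ s, s ∉ I k ∧ I (k + 1) = insert s (I k)) ∨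
    (∃ s, s ∈ I k ∧ I (k + 1) = I k \ {s})

/-- `p` is a path subordinate to the singlestep expression `[I 0, …, I d]`. -/
def IsSubPath (cs : CoxeterSystem M W) (I : ℕ → Set B) (d : ℕ) (p : ℕ → Set W) : Prop :=
  p 0 = doset cs (I 0) (I 0) 1 ∧
  (∀ i ≤ d, IsDCoset cs (I 0) (I i) (p i)) ∧
  ∀ k < d, (I k ⊆ I (k + 1) → p k ⊆ p (k + 1)) ∧ (I (k + 1) ⊆ I k → p (k + 1) ⊆ p k)

/-- The Demazure product `w_{I_0} * w_{I_1} * ⋯ * w_{I_d}` of the longest elements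
`wI 0, …, wI d`. -/
noncomputable def exprMax (cs : CoxeterSystem M W) (wI : ℕ → W) (d : ℕ) : W :=
  ((List.range d).map fun k => wI (k + 1)).foldl (dem cs) (wI 0)

/-!
The simple reflections act on `W × ZMod 2` by `(x, e) ↦ (s x s, e + [x = s])`. These
permutations satisfy the Coxeter relations, so `W` acts, and the second coordinate yields a
cocycle `N(w, x)` with `N(w, t) = 1` exactly when `ℓ(w t) < ℓ(w)`, for every reflection `t`.
The cocycle identity `N(c s, s t s) = [t = s] + N(c, t)` shows that a Bruhat step `c < c t`
with `t ≠ s` survives right multiplication by `s`; hence the Demazure step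
`w ↦ max(w, w s)` is monotone for the Bruhat order. The lifting statement follows by
induction on `ℓ(x)`: peel off a right descent `s` of `x`, and multiply `x'` by `s` exactly
when `w x' s > w x'`.
-/

theorem mul_mul_inv_eq_iff_eq_inv_mul_mul {G : Type*} [Group G] {g x y : G} :
    g * x * g⁻¹ = y ↔ x = g⁻¹ * y * g := by
  constructor <;> rintro rfl <;> group

section ReflectionParity

open Finset

variable (cs : CoxeterSystem M W)

local prefix:100 "s" => cs.simple
local prefix:100 "π" => cs.wordProd
local prefix:100 "ℓ" => cs.length

open scoped Classical

theorem simple_mul_mul_simple_eq_iff {x y : W} (i : B) :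
    s i * x * s i = y ↔ x = s i * y * s i := by
  simpa only [cs.inv_simple] using mul_mul_inv_eq_iff_eq_inv_mul_mul (g := s i) (x := x) (y := y)

noncomputable def reflParityPerm (i : B) : Equiv.Perm (W × ZMod 2) :=
  Function.Involutive.toPerm (fun p => (s i * p.1 * s i, p.2 + if p.1 = s i then 1 else 0)) <| by
    rintro ⟨x, e⟩
    have hss : s i * s i * s i = s i := cs.simple_mul_simple_cancel_right i
    refine Prod.ext ?_ ?_
    · simp [mul_assoc, cs.simple_mul_simple_cancel_left]
    · change e + _ + (if s i * x * s i = s i then 1 else 0) = e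
      rw [simple_mul_mul_simple_eq_iff, hss, add_assoc, CharTwo.add_self_eq_zero, add_zero]

theorem reflParityPerm_apply (i : B) (x : W) (e : ZMod 2) :
    reflParityPerm cs i (x, e) = (s i * x * s i, e + if x = s i then 1 else 0) :=
  rfl

theorem reflParityPerm_mul_pow_apply (i i' : B) (n : ℕ) (x : W) (e : ZMod 2) :
    ((reflParityPerm cs i * reflParityPerm cs i') ^ n) (x, e) =
      ((s i * s i') ^ n * x * ((s i * s i') ^ n)⁻¹,
        e + ∑ k ∈ range (2 * n), if x = s i' * (s i * s i') ^ k then 1 else 0) := by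
  set g := s i * s i'
  have hg : g⁻¹ = s i' * s i := by simp [g, cs.inv_simple]
  have hconj : ∀ y, s i * (s i' * y * s i') * s i = g * y * g⁻¹ := by
    intro y; simp only [hg, g, mul_assoc]
  induction n generalizing x e with
  | zero => simp
  | succ n ih =>
    have h1 : s i' * x * s i' = s i ↔ x = s i' * g ^ 1 := by
      rw [simple_mul_mul_simple_eq_iff, pow_one, mul_assoc]
    have h2 : ∀ k, g * x * g⁻¹ = s i' * g ^ k ↔ x = s i' * g ^ (k + 1 + 1) := by
      intro k
      rw [mul_mul_inv_eq_iff_eq_inv_mul_mul, pow_succ, pow_succ, ← (Commute.self_pow g k).eq, hg]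
      simp only [g, mul_assoc]
    rw [pow_succ, Equiv.Perm.mul_apply, Equiv.Perm.mul_apply, reflParityPerm_apply,
      reflParityPerm_apply, ih, hconj, mul_add, sum_range_succ', sum_range_succ']
    simp only [h1, h2, zero_add, pow_zero, mul_one]
    refine Prod.ext ?_ ?_
    · simp only [pow_succ, mul_inv_rev, mul_assoc]
    · dsimp only
      ac_rfl

theorem isLiftable_reflParityPerm : M.IsLiftable (reflParityPerm cs) := by
  intro i i'
  ext ⟨x, e⟩ : 1
  have hper : ∀ k, (s i * s i') ^ (M i i' + k) = (s i * s i') ^ k := by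
    simp [pow_add, cs.simple_mul_simple_pow]
  rw [reflParityPerm_mul_pow_apply, two_mul, sum_range_add]
  simp [hper, CharTwo.add_self_eq_zero, cs.simple_mul_simple_pow]

noncomputable def reflParityRep : W →* Equiv.Perm (W × ZMod 2) :=
  cs.lift ⟨reflParityPerm cs, isLiftable_reflParityPerm cs⟩

/-- The parity of the number of occurrences of `x` in the right inversion sequence of any
expression for `w`. -/
noncomputable def inversionParity (w x : W) : ZMod 2 :=
  (reflParityRep cs w (x, 0)).2

theorem reflParityRep_apply (w x : W) (e : ZMod 2) :
    reflParityRep cs w (x, e) = (w * x * w⁻¹, e + inversionParity cs w x) := by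
  induction w using cs.simple_induction_left generalizing e with
  | one => simp [inversionParity]
  | mul_simple_left w i ih =>
    have hrep : ∀ f, reflParityRep cs (s i * w) (x, f) = (s i * (w * x * w⁻¹) * s i,
        f + inversionParity cs w x + if w * x * w⁻¹ = s i then 1 else 0) := by
      intro f
      rw [map_mul, Equiv.Perm.mul_apply, ih, reflParityRep, cs.lift_apply_simple,
        reflParityPerm_apply]
    have hpar : inversionParity cs (s i * w) x =
        inversionParity cs w x + if w * x * w⁻¹ = s i then 1 else 0 := by
      rw [inversionParity, hrep, zero_add]
    rw [hrep, hpar, mul_inv_rev, cs.inv_simple]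
    simp only [mul_assoc, add_assoc]

theorem inversionParity_mul (u v x : W) :
    inversionParity cs (u * v) x =
      inversionParity cs v x + inversionParity cs u (v * x * v⁻¹) := by
  rw [inversionParity, map_mul, Equiv.Perm.mul_apply, reflParityRep_apply, reflParityRep_apply,
    zero_add]

theorem inversionParity_one (x : W) : inversionParity cs 1 x = 0 := by
  simp [inversionParity]

theorem inversionParity_simple (i : B) (x : W) :
    inversionParity cs (s i) x = if x = s i then 1 else 0 := by
  rw [inversionParity, reflParityRep, cs.lift_apply_simple, reflParityPerm_apply, zero_add]

theorem mem_rightInvSeq_of_inversionParity_ne_zero {t : W} {ω : List B}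
    (h : inversionParity cs (π ω) t ≠ 0) : t ∈ cs.rightInvSeq ω := by
  induction ω with
  | nil => exact absurd (inversionParity_one cs t) h
  | cons i ω ih =>
    rw [cs.wordProd_cons, inversionParity_mul, inversionParity_simple,
      mul_mul_inv_eq_iff_eq_inv_mul_mul] at h
    rw [CoxeterSystem.rightInvSeq, List.mem_cons]
    by_cases ht : t = (π ω)⁻¹ * s i * π ω
    · exact Or.inl ht
    · rw [if_neg ht, add_zero] at h
      exact Or.inr (ih h)

theorem inversionParity_self {t : W} (ht : cs.IsReflection t) : inversionParity cs t t = 1 := by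
  obtain ⟨v, i, rfl⟩ := ht
  have hinv := inversionParity_mul cs v v⁻¹ (v * s i * v⁻¹)
  have hconj : v⁻¹ * (v * s i * v⁻¹) * v⁻¹⁻¹ = s i := by group
  have hss : s i * s i * (s i)⁻¹ = s i := by group
  rw [mul_inv_cancel, inversionParity_one, hconj] at hinv
  rw [inversionParity_mul, hconj, inversionParity_mul, hss, inversionParity_simple, if_pos rfl,
    add_left_comm, ← hinv, add_zero]

theorem inversionParity_eq_one_iff {w t : W} (ht : cs.IsReflection t) :
    inversionParity cs w t = 1 ↔ ℓ (w * t) < ℓ w := by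
  have hlt : ∀ {u : W}, inversionParity cs u t = 1 → ℓ (u * t) < ℓ u := by
    intro u h
    obtain ⟨ω, hω, rfl⟩ := cs.exists_isReduced u
    exact (cs.isRightInversion_of_mem_rightInvSeq hω
      (mem_rightInvSeq_of_inversionParity_ne_zero cs (h ▸ one_ne_zero))).2
  refine ⟨hlt, fun h => ?_⟩
  have hw : inversionParity cs w t = 1 + inversionParity cs (w * t) t := by
    conv_lhs => rw [← mul_one w, ← ht.mul_self, ← mul_assoc]
    rw [inversionParity_mul, inversionParity_self cs ht, ht.mul_self, one_mul, ht.inv]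
  have hwt : inversionParity cs (w * t) t ≠ 1 := fun h' => by
    have := hlt h'
    rw [mul_assoc, ht.mul_self, mul_one] at this
    omega
  rw [hw]
  revert hwt
  generalize inversionParity cs (w * t) t = z
  decide +revert

theorem isReflection_simple_mul_mul_simple {t : W} (ht : cs.IsReflection t) (i : B) :
    cs.IsReflection (s i * t * s i) := by
  simpa only [cs.inv_simple] using ht.conj (s i)

theorem length_mul_simple_lt_length_mul_simple_mul_conj {c t : W} {i : B}
    (ht : cs.IsReflection t) (hti : t ≠ s i) (h : ℓ c < ℓ (c * t)) :
    ℓ (c * s i) < ℓ (c * s i * (s i * t * s i)) := by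
  have ht' := isReflection_simple_mul_mul_simple cs ht i
  refine lt_of_le_of_ne (not_lt.mp fun hlt => ?_) (ht'.length_mul_left_ne _).symm
  have hpar := inversionParity_mul cs c (s i) (s i * t * s i)
  rw [(inversionParity_eq_one_iff cs ht').mpr hlt, inversionParity_simple,
    if_neg (by rwa [simple_mul_mul_simple_eq_iff, cs.simple_mul_simple_cancel_right]),
    cs.inv_simple, zero_add, (simple_mul_mul_simple_eq_iff cs i).mpr rfl] at hpar
  exact absurd ((inversionParity_eq_one_iff cs ht).mp hpar.symm) (not_lt.mpr h.le)

end ReflectionParity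

section Bruhat

variable {cs : CoxeterSystem M W}

local prefix:100 "s" => cs.simple
local prefix:100 "ℓ" => cs.length

theorem BruhatLE.refl (w : W) : BruhatLE cs w w := Relation.ReflTransGen.refl

theorem BruhatLE.trans {u v w : W} (huv : BruhatLE cs u v) (hvw : BruhatLE cs v w) :
    BruhatLE cs u w :=
  Relation.ReflTransGen.trans huv hvw

theorem bruhatLE_mul_of_length_lt {w t : W} (ht : cs.IsReflection t) (h : ℓ w < ℓ (w * t)) :
    BruhatLE cs w (w * t) :=
  Relation.ReflTransGen.single ⟨⟨t, ht, rfl⟩, h⟩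

theorem bruhatLE_mul_simple_of_length_lt {w : W} {i : B} (h : ℓ w < ℓ (w * s i)) :
    BruhatLE cs w (w * s i) :=
  bruhatLE_mul_of_length_lt (cs.isReflection_simple i) h

theorem mul_simple_bruhatLE_of_length_lt {w : W} {i : B} (h : ℓ (w * s i) < ℓ w) :
    BruhatLE cs (w * s i) w := by
  have hstep := bruhatLE_mul_simple_of_length_lt (w := w * s i) (i := i)
    (by rwa [cs.simple_mul_simple_cancel_right])
  rwa [cs.simple_mul_simple_cancel_right] at hstep

theorem demStep_of_length_lt {w : W} {i : B} (h : ℓ w < ℓ (w * s i)) :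
    demStep cs w i = w * s i :=
  if_pos h

theorem demStep_of_not_length_lt {w : W} {i : B} (h : ¬ℓ w < ℓ (w * s i)) :
    demStep cs w i = w :=
  if_neg h

theorem bruhatLE_demStep (w : W) (i : B) : BruhatLE cs w (demStep cs w i) := by
  unfold demStep
  split_ifs with h
  · exact bruhatLE_mul_simple_of_length_lt h
  · exact .refl w

theorem mul_simple_bruhatLE_demStep (w : W) (i : B) : BruhatLE cs (w * s i) (demStep cs w i) := by
  unfold demStep
  split_ifs with h
  · exact .refl _
  · exact mul_simple_bruhatLE_of_length_lt
      (lt_of_le_of_ne (not_lt.mp h) (cs.length_mul_simple_ne w i))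

theorem demStep_bruhatLE_demStep_mul {c t : W} (ht : cs.IsReflection t) (h : ℓ c < ℓ (c * t))
    (i : B) : BruhatLE cs (demStep cs c i) (demStep cs (c * t) i) := by
  by_cases hti : t = s i
  · subst hti
    rw [demStep_of_length_lt h]
    exact bruhatLE_demStep _ i
  have hc : BruhatLE cs c (demStep cs (c * t) i) :=
    (bruhatLE_mul_of_length_lt ht h).trans (bruhatLE_demStep _ i)
  have hcs : BruhatLE cs (c * s i) (demStep cs (c * t) i) := by
    refine .trans ?_ (mul_simple_bruhatLE_demStep _ i)
    have hct : c * t * s i = c * s i * (s i * t * s i) := by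
      simp only [mul_assoc, cs.simple_mul_simple_cancel_left]
    rw [hct]
    exact bruhatLE_mul_of_length_lt (isReflection_simple_mul_mul_simple cs ht i)
      (length_mul_simple_lt_length_mul_simple_mul_conj cs ht hti h)
  by_cases hci : ℓ c < ℓ (c * s i)
  · rwa [demStep_of_length_lt hci]
  · rwa [demStep_of_not_length_lt hci]

theorem demStep_mono {a b : W} (h : BruhatLE cs a b) (i : B) :
    BruhatLE cs (demStep cs a i) (demStep cs b i) := by
  induction h with
  | refl => exact .refl _
  | tail _ hstep ih =>
    obtain ⟨⟨t, ht, rfl⟩, hlt⟩ := hstep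
    exact ih.trans (demStep_bruhatLE_demStep_mul ht hlt i)

theorem mul_simple_bruhatLE_demStep_of_bruhatLE {a b : W} (h : BruhatLE cs a b) (i : B) :
    BruhatLE cs (a * s i) (demStep cs b i) :=
  (mul_simple_bruhatLE_demStep a i).trans (demStep_mono h i)

theorem exists_lift_mul_simple {v w y x' : W} {i : B} (hx' : BruhatLE cs x' y)
    (hvy : BruhatLE cs (v * y) (w * x')) (hlen : ℓ (w * x') = ℓ w + ℓ x')
    (hy : ℓ y < ℓ (y * s i)) :
    ∃ x'', BruhatLE cs x'' (y * s i) ∧ BruhatLE cs (v * (y * s i)) (w * x'') ∧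
      ℓ (w * x'') = ℓ w + ℓ x'' := by
  have hvys := mul_simple_bruhatLE_demStep_of_bruhatLE hvy i
  rw [mul_assoc] at hvys
  by_cases hwx : ℓ (w * x') < ℓ (w * x' * s i)
  · refine ⟨x' * s i, ?_, ?_, ?_⟩
    · simpa only [demStep_of_length_lt hy] using mul_simple_bruhatLE_demStep_of_bruhatLE hx' i
    · rwa [demStep_of_length_lt hwx, mul_assoc] at hvys
    · have hsub := cs.length_mul_le w (x' * s i)
      have hsub' := cs.length_mul_le x' (s i)
      rw [cs.length_simple] at hsub'
      rw [← mul_assoc] at hsub ⊢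
      rcases cs.length_mul_simple (w * x') i with h | h <;> omega
  · refine ⟨x', hx'.trans (bruhatLE_mul_simple_of_length_lt hy), ?_, hlen⟩
    rwa [demStep_of_not_length_lt hwx] at hvys

end Bruhat

/-- Lifting: if `v ≤ w` then there is `x' ≤ x` with `v * x ≤ w * x'` and the
product `w * x'` reduced. -/
theorem lifting_right (cs : CoxeterSystem M W) (v w x : W) (h : BruhatLE cs v w) :
    ∃ x', BruhatLE cs x' x ∧ BruhatLE cs (v * x) (w * x') ∧
      cs.length (w * x') = cs.length w + cs.length x' := by
  induction hx : cs.length x using Nat.strong_induction_on generalizing x with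
  | _ n ih =>
  rcases eq_or_ne x 1 with rfl | hx1
  · exact ⟨1, .refl 1, by simpa only [mul_one] using h, by simp⟩
  obtain ⟨i, hi⟩ := cs.exists_rightDescent_of_ne_one hx1
  obtain ⟨x', hx', hvx, hlen⟩ := ih _ (hx ▸ hi) (x * cs.simple i) rfl
  have hlift := exists_lift_mul_simple hx' hvx hlen (by rwa [cs.simple_mul_simple_cancel_right])
  rwa [cs.simple_mul_simple_cancel_right] at hlift

end CoxeterPaper
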